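/- Let N ≥ 5 and k ≥ 1 be integers and let H₁, A, B be strictly positive real numbers. Then the function Ψ : (0,∞)^k → ℝ defined by Ψ(ν) = H₁ ν₁² + A ν_k^{-2(N-2)/(N-4)} + B Σ_{j=1}^{k-1} ν_{j+1}/ν_j attains its global minimum at some point ν̂ ∈ (0,∞)^k, i.e. there exists ν̂ ∈ (0,∞)^k with Ψ(ν̂) ≤ Ψ(ν) for all ν ∈ (0,∞)^k. -/

import Mathlib

/-!
On a sublevel set `{Ψ ≤ c}` of the open orthant every term of `Ψ` is at most `c`. The first term
bounds `ν₁` above, the second bounds `ν_k` below (its exponent is negative since `N ≥ 5`), and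
the ratio terms give `ν_{j+1} ≤ (c/B) ν_j`, which propagates both bounds along the chain. So the
sublevel set lies in a compact box inside the orthant, where the continuous `Ψ` attains its
minimum.
-/

/-- `Ψ(ν) = H₁ ν₁² + A ν_k^{-2(N-2)/(N-4)} + B Σ_{j=1}^{k-1} ν_{j+1}/ν_j`. -/
noncomputable def Psi (N k : ℕ) (hk : 0 < k) (H₁ A B : ℝ) (ν : Fin k → ℝ) : ℝ :=
  H₁ * ν ⟨0, hk⟩ ^ 2
    + A * ν ⟨k - 1, Nat.sub_lt hk Nat.one_pos⟩ ^ (-(2 * ((N : ℝ) - 2)) / ((N : ℝ) - 4))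
    + B * ∑ j : Fin (k - 1),
        ν ⟨j.1 + 1, by have := j.2; omega⟩ / ν ⟨j.1, by have := j.2; omega⟩

open Set

theorem exists_isMinOn_of_sublevel_subset {X α : Type*} [TopologicalSpace X] [LinearOrder α]
    [TopologicalSpace α] [OrderClosedTopology α] {f : X → α} {S K : Set X} (hK : IsCompact K)
    (hKS : K ⊆ S) (hf : ContinuousOn f K) {x₀ : X} (hx₀ : x₀ ∈ S)
    (hsub : ∀ x ∈ S, f x ≤ f x₀ → x ∈ K) : ∃ x ∈ S, IsMinOn f S x := by
  have hx₀K : x₀ ∈ K := hsub x₀ hx₀ le_rfl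
  obtain ⟨x, hxK, hmin⟩ := hK.exists_isMinOn ⟨x₀, hx₀K⟩ hf
  refine ⟨x, hKS hxK, fun y hy => ?_⟩
  by_cases hy₀ : f y ≤ f x₀
  · exact hmin (hsub y hy hy₀)
  · exact (hmin hx₀K).trans (not_le.mp hy₀).le

theorem Fin.le_pow_sub_mul_of_succ_le {α : Type*} [Semiring α] [PartialOrder α]
    [IsOrderedRing α] {k : ℕ} {ν : Fin k → α} {q : α} (hq : 0 ≤ q)
    (h : ∀ (j : ℕ) (hj : j + 1 < k), ν ⟨j + 1, hj⟩ ≤ q * ν ⟨j, by omega⟩)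
    {i j : ℕ} (hij : i ≤ j) (hj : j < k) : ν ⟨j, hj⟩ ≤ q ^ (j - i) * ν ⟨i, hij.trans_lt hj⟩ := by
  induction j, hij using Nat.le_induction with
  | base => simp
  | succ j hij ih =>
    calc ν ⟨j + 1, hj⟩ ≤ q * ν ⟨j, by omega⟩ := h j hj
      _ ≤ q * (q ^ (j - i) * ν ⟨i, by omega⟩) := mul_le_mul_of_nonneg_left (ih (by omega)) hq
      _ = q ^ (j + 1 - i) * ν ⟨i, by omega⟩ := by
        rw [Nat.succ_sub hij, pow_succ', mul_assoc]

theorem Real.rpow_inv_le_of_mul_rpow_le {A c x p : ℝ} (hA : 0 < A) (hx : 0 < x) (hp : p < 0)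
    (h : A * x ^ p ≤ c) : (c / A) ^ p⁻¹ ≤ x := by
  have hxp : x ^ p ≤ c / A := (le_div_iff₀' hA).mpr h
  calc (c / A) ^ p⁻¹ ≤ (x ^ p) ^ p⁻¹ :=
        Real.rpow_le_rpow_of_nonpos (Real.rpow_pos_of_pos hx p) hxp (inv_nonpos.mpr hp.le)
    _ = x := Real.rpow_rpow_inv hx.le hp.ne

section Psi

variable {N k : ℕ} {hk : 0 < k} {H₁ A B : ℝ}

theorem Psi_continuousOn : ContinuousOn (Psi N k hk H₁ A B) {ν | ∀ i, 0 < ν i} := by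
  have hcoord (i : Fin k) : ContinuousOn (fun ν : Fin k → ℝ => ν i) {ν | ∀ i, 0 < ν i} :=
    (continuous_apply i).continuousOn
  refine ((Continuous.continuousOn (by fun_prop)).add ?_).add ?_
  · exact continuousOn_const.mul ((hcoord _).rpow_const fun ν hν => Or.inl (hν _).ne')
  · exact continuousOn_const.mul (continuousOn_finsetSum _ fun j _ =>
      (hcoord _).div (hcoord _) fun ν hν => (hν _).ne')

theorem Psi_terms_le (hH₁ : 0 ≤ H₁) (hA : 0 ≤ A) (hB : 0 ≤ B) {ν : Fin k → ℝ}
    (hν : ∀ i, 0 < ν i) :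
    H₁ * ν ⟨0, hk⟩ ^ 2 ≤ Psi N k hk H₁ A B ν ∧
    A * ν ⟨k - 1, Nat.sub_lt hk Nat.one_pos⟩ ^ (-(2 * ((N : ℝ) - 2)) / ((N : ℝ) - 4))
      ≤ Psi N k hk H₁ A B ν ∧
    ∀ (j : ℕ) (hj : j + 1 < k),
      B * (ν ⟨j + 1, hj⟩ / ν ⟨j, by omega⟩) ≤ Psi N k hk H₁ A B ν := by
  have hratio : ∀ j : Fin (k - 1), 0 ≤ ν ⟨j.1 + 1, by omega⟩ / ν ⟨j.1, by omega⟩ :=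
    fun _ => (div_pos (hν _) (hν _)).le
  have h₁ : 0 ≤ H₁ * ν ⟨0, hk⟩ ^ 2 := by positivity
  have h₂ : 0 ≤ A * ν ⟨k - 1, Nat.sub_lt hk Nat.one_pos⟩ ^
      (-(2 * ((N : ℝ) - 2)) / ((N : ℝ) - 4)) :=
    mul_nonneg hA (Real.rpow_nonneg (hν _).le _)
  have h₃ := mul_nonneg hB (Finset.sum_nonneg fun j (_ : j ∈ Finset.univ) => hratio j)
  refine ⟨by unfold Psi; linarith, by unfold Psi; linarith, fun j hj => ?_⟩
  have hle := Finset.single_le_sum (fun j (_ : j ∈ Finset.univ) => hratio j)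
    (Finset.mem_univ (⟨j, by omega⟩ : Fin (k - 1)))
  have := mul_le_mul_of_nonneg_left hle hB
  unfold Psi
  linarith

theorem Psi_pos (hH₁ : 0 ≤ H₁) (hA : 0 < A) (hB : 0 ≤ B) {ν : Fin k → ℝ} (hν : ∀ i, 0 < ν i) :
    0 < Psi N k hk H₁ A B ν :=
  (mul_pos hA (Real.rpow_pos_of_pos (hν _) _)).trans_le (Psi_terms_le hH₁ hA.le hB hν).2.1

theorem exists_Psi_sublevel_subset_Icc (hN : 5 ≤ N) (hH₁ : 0 < H₁) (hA : 0 < A) (hB : 0 < B)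
    {c : ℝ} (hc : 0 < c) : ∃ lo hi : Fin k → ℝ, (∀ i, 0 < lo i) ∧
      ∀ ν : Fin k → ℝ, (∀ i, 0 < ν i) → Psi N k hk H₁ A B ν ≤ c → ν ∈ Icc lo hi := by
  set p : ℝ := -(2 * ((N : ℝ) - 2)) / ((N : ℝ) - 4)
  have hp : p < 0 := by
    have : (5 : ℝ) ≤ N := by exact_mod_cast hN
    exact div_neg_of_neg_of_pos (by linarith) (by linarith)
  have hq : 0 ≤ c / B := (div_pos hc hB).le
  refine ⟨fun i => (c / A) ^ p⁻¹ / (c / B) ^ (k - 1 - i), fun i => (c / B) ^ i.1 * √(c / H₁),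
    fun i => by positivity, fun ν hν hνc => ?_⟩
  obtain ⟨hfirst, hlast, hratio⟩ := Psi_terms_le (N := N) (hk := hk) hH₁.le hA.le hB.le hν
  have hchain (j : ℕ) (hj : j + 1 < k) : ν ⟨j + 1, hj⟩ ≤ c / B * ν ⟨j, by omega⟩ := by
    have := (hratio j hj).trans hνc
    rwa [← le_div_iff₀' hB, div_le_iff₀ (hν _)] at this
  refine ⟨fun i => ?_, fun i => ?_⟩
  · have hlast' : (c / A) ^ p⁻¹ ≤ ν ⟨k - 1, Nat.sub_lt hk Nat.one_pos⟩ :=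
      Real.rpow_inv_le_of_mul_rpow_le hA (hν _) hp (hlast.trans hνc)
    have hgeom := Fin.le_pow_sub_mul_of_succ_le hq hchain (Nat.le_sub_one_of_lt i.2)
      (Nat.sub_lt hk Nat.one_pos)
    rw [div_le_iff₀ (by positivity), mul_comm]
    exact hlast'.trans hgeom
  · have hfirst' : ν ⟨0, hk⟩ ≤ √(c / H₁) := (Real.le_sqrt (hν _).le (div_pos hc hH₁).le).mpr
      ((le_div_iff₀' hH₁).mpr (hfirst.trans hνc))
    have hgeom := Fin.le_pow_sub_mul_of_succ_le hq hchain (Nat.zero_le i.1) i.2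
    simpa using hgeom.trans (mul_le_mul_of_nonneg_left hfirst' (by positivity))

end Psi

/-- For `H₁, A, B > 0` the function `Ψ` attains its global minimum on `(0,∞)^k`. -/
theorem statement13 (N k : ℕ) (hN : 5 ≤ N) (hk : 0 < k) (H₁ A B : ℝ)
    (hH₁ : 0 < H₁) (hA : 0 < A) (hB : 0 < B) :
    ∃ νhat : Fin k → ℝ, (∀ i, 0 < νhat i) ∧
      ∀ ν : Fin k → ℝ, (∀ i, 0 < ν i) →
        Psi N k hk H₁ A B νhat ≤ Psi N k hk H₁ A B ν := by
  have hone : ∀ i : Fin k, (0 : ℝ) < 1 := fun _ => one_pos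
  obtain ⟨lo, hi, hlo, hsub⟩ := exists_Psi_sublevel_subset_Icc (hk := hk) hN hH₁ hA hB
    (Psi_pos hH₁.le hA hB.le hone)
  have hbox : Icc lo hi ⊆ {ν | ∀ i, 0 < ν i} := fun ν hν i => (hlo i).trans_le (hν.1 i)
  obtain ⟨νhat, hνhat, hmin⟩ := exists_isMinOn_of_sublevel_subset isCompact_Icc hbox
    (Psi_continuousOn.mono hbox) (x₀ := fun _ => 1) hone hsub
  exact ⟨νhat, hνhat, fun ν hν => hmin hν⟩
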